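/- Let M = (S, A, X, T, i) be a parametric MDP with induced POMDP M', let p ∈ Dist(X) be a parameter distribution, let π_X be a pMDP policy of M, let π' = Φ(π_X) = π_X ∘ f⁻¹, and let i' ∈ Dist(S×X) be given by i'(s,x) = i(s)·p(x). Then for every x ∈ X and every history h of M(x), P^M_{π_X,i,p}({x} × Cone(h)) = P^{M'}_{π',i'}(Cone(f(x,h))), and both equal p(x) · P^{M(x)}_{π_x,i}(Cone(h)), where π_x(h) = π_X(x,h). -/
import Mathlib


open MeasureTheory ENNReal

namespace PMDPEncoding

universe u v w

variable {S : Type u} {A : Type v} {X : Type w}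

/-- An infinite alternating sequence of state-action pairs
(the `k`-th pair consists of the `k`-th state and the `k`-th action of the run). -/
abbrev RunSeq (S : Type u) (A : Type v) := ℕ → S × A

/-- `ρ` is a run of the MDP with transition function `T`:
all transitions have positive probability. -/
def IsRun (T : S → A → PMF S) (ρ : RunSeq S A) : Prop :=
  ∀ k, 0 < T (ρ k).1 (ρ k).2 (ρ (k + 1)).1

/-- A history: a finite list of state-action pairs followed by a final state. -/
abbrev Hist (S : Type u) (A : Type v) := List (S × A) × S

/-- The first state of a history. -/
def Hist.first (h : Hist S A) : S :=
  match h.1 with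
  | [] => h.2
  | p :: _ => p.1

/-- Auxiliary for `IsHist`: validity of the list part of a history with final state `t`. -/
def IsHistL (T : S → A → PMF S) : List (S × A) → S → Prop
  | [], _ => True
  | (s, a) :: rest, t => 0 < T s a (Hist.first (rest, t)) ∧ IsHistL T rest t

/-- `h` is a history (finite prefix of a run) of the MDP with transition function `T`. -/
def IsHist (T : S → A → PMF S) (h : Hist S A) : Prop := IsHistL T h.1 h.2

/-- The set of runs of the MDP with transition function `T`. -/
def Runs (T : S → A → PMF S) := {ρ : RunSeq S A // IsRun T ρ}

/-- The set of (raw) sequences having the history `h` as a prefix. -/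
def ConeSeq (h : Hist S A) : Set (RunSeq S A) :=
  {ρ | (∀ k, (hk : k < h.1.length) → ρ k = h.1[k]'hk) ∧ (ρ h.1.length).1 = h.2}

/-- The cone of a history: the set of runs with prefix `h`. -/
def Cone (T : S → A → PMF S) (h : Hist S A) : Set (Runs T) :=
  {ρ | ρ.1 ∈ ConeSeq h}

/-- The σ-algebra on runs generated by the cones of histories. -/
instance conesAlg (T : S → A → PMF S) : MeasurableSpace (Runs T) :=
  MeasurableSpace.generateFrom {C | ∃ h : Hist S A, IsHist T h ∧ C = Cone T h}

/-- Valid histories of an MDP, as a subtype. -/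
def HistOf (T : S → A → PMF S) := {h : Hist S A // IsHist T h}

/-- Auxiliary function for the probability of a cone:
`pre` is the prefix of the history processed so far. -/
noncomputable def coneProbAux (T : S → A → PMF S) (π : Hist S A → PMF A) :
    List (S × A) → List (S × A) → S → ℝ≥0∞
  | _, [], _ => 1
  | pre, (s, a) :: rest, t =>
      π (pre, s) a * T s a (Hist.first (rest, t)) *
        coneProbAux T π (pre ++ [(s, a)]) rest t

/-- The probability `i(s₀) · ∏_{k<n} π(s₀a₀…s_k)(a_k) · T(s_k,a_k)(s_{k+1})` that the
induced measure of policy `π` and initial distribution `i` assigns to the cone of a history. -/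
noncomputable def coneProb (T : S → A → PMF S) (i : PMF S) (π : Hist S A → PMF A)
    (h : Hist S A) : ℝ≥0∞ :=
  i h.first * coneProbAux T π [] h.1 h.2

/-- The evaluated transition function `T_x` of a pMDP at parameter point `x`. -/
def evalT (T : S → A → X → PMF S) (x : X) : S → A → PMF S := fun s a => T s a x

/-- Runs of a pMDP: pairs `(x, ρ)` of a parameter value `x` and a run `ρ` of `M(x)`. -/
def RunsX (T : S → A → X → PMF S) := {q : X × RunSeq S A // IsRun (evalT T q.1) q.2}

/-- Valid histories of a pMDP: pairs `(x, h)` with `h` a history of `M(x)`. -/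
def HistX (T : S → A → X → PMF S) := {q : X × Hist S A // IsHist (evalT T q.1) q.2}

/-- The generator set `{x} × Cone(h)` of the σ-algebra on the runs of a pMDP. -/
def ConeX (T : S → A → X → PMF S) (x : X) (h : Hist S A) : Set (RunsX T) :=
  {q | q.1.1 = x ∧ q.1.2 ∈ ConeSeq h}

/-- The σ-algebra on the runs of a pMDP generated by the sets `{x} × Cone(h)`. -/
instance conesXAlg (T : S → A → X → PMF S) : MeasurableSpace (RunsX T) :=
  MeasurableSpace.generateFrom
    {C | ∃ (x : X) (h : Hist S A), IsHist (evalT T x) h ∧ C = ConeX T x h}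

/-- The transition function `T'` of the induced POMDP of a pMDP:
`T'((s,x),a)(s',x') = T(s,a)(x)(s') · δ_x(x')`. -/
noncomputable def indT (T : S → A → X → PMF S) : S × X → A → PMF (S × X) :=
  fun sx a => (T sx.1 a sx.2).map fun s' => (s', sx.2)

/-- The observation function of the induced POMDP: `O(s,x) = s`. -/
def obs : S × X → S := Prod.fst

/-- The observation map extended to histories of the induced POMDP. -/
def obsHist : Hist (S × X) A → Hist S A :=
  fun h => (h.1.map fun p => (p.1.1, p.2), h.2.1)

/-- The map `f` on raw sequences: `f(x, s₀·a₀·s₁·⋯) = (s₀,x)·a₀·(s₁,x)·⋯`. -/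
def fSeq (x : X) (ρ : RunSeq S A) : RunSeq (S × X) A :=
  fun k => (((ρ k).1, x), (ρ k).2)

theorem indT_pos {T : S → A → X → PMF S} {s s' : S} {a : A} {x : X}
    (h : 0 < T s a x s') : 0 < indT T (s, x) a (s', x) := by
  have hmem : (s', x) ∈ ((T s a x).map fun u => (u, x)).support := by
    rw [PMF.support_map]
    exact ⟨s', (PMF.mem_support_iff _ _).2 h.ne', rfl⟩
  exact pos_iff_ne_zero.mpr ((PMF.mem_support_iff _ _).1 hmem)

/-- The map `f : Runs_X → Runs'` from the runs of a pMDP to the runs of its induced POMDP. -/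
def fRun (T : S → A → X → PMF S) (q : RunsX T) : Runs (indT T) :=
  ⟨fSeq q.1.1 q.1.2, fun k => indT_pos (q.2 k)⟩

/-- The map `f` on raw histories: `f(x, s₀·a₀·⋯·s_n) = (s₀,x)·a₀·⋯·(s_n,x)`. -/
def fHistSeq (x : X) (h : Hist S A) : Hist (S × X) A :=
  (h.1.map fun p => ((p.1, x), p.2), (h.2, x))

theorem isHist_fHistSeq (T : S → A → X → PMF S) (x : X) :
    ∀ (l : List (S × A)) (t : S), IsHist (evalT T x) (l, t) →
      IsHist (indT T) (fHistSeq x (l, t))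
  | [], _, _ => trivial
  | (s, a) :: rest, t, hv => by
      obtain ⟨h1, h2⟩ := hv
      have hrec := isHist_fHistSeq T x rest t h2
      refine ⟨?_, hrec⟩
      show 0 < indT T (s, x) a (Hist.first ((rest.map fun p => ((p.1, x), p.2)), (t, x)))
      have hfirst : Hist.first ((rest.map fun p => ((p.1, x), p.2) : List ((S × X) × A)), (t, x)) =
          (Hist.first (rest, t), x) := by
        cases rest <;> rfl
      rw [hfirst]
      exact indT_pos h1

/-- The map `f : Hist_X → Hist'` from the histories of a pMDP to the histories of
its induced POMDP. -/
def fHistX (T : S → A → X → PMF S) (q : HistX T) : HistOf (indT T) :=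
  ⟨fHistSeq q.1.1 q.1.2, isHist_fHistSeq T q.1.1 q.1.2.1 q.1.2.2 q.2⟩

/-- Some run of an MDP: start anywhere, always pick a fixed action, and follow the
support of the transition distributions. -/
noncomputable def someRunSeq (T : S → A → PMF S) (sa : S × A) (a : A) : RunSeq S A :=
  fun k => Nat.rec sa (fun _ ih => ((PMF.support_nonempty (T ih.1 ih.2)).some, a)) k

theorem someRunSeq_isRun (T : S → A → PMF S) (sa : S × A) (a : A) :
    IsRun T (someRunSeq T sa a) := by
  intro k
  exact pos_iff_ne_zero.mpr <| (PMF.mem_support_iff _ _).1 <|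
    (PMF.support_nonempty (T (someRunSeq T sa a k).1 (someRunSeq T sa a k).2)).some_mem

instance instNonemptyRuns [Nonempty S] [Nonempty A] (T : S → A → PMF S) :
    Nonempty (Runs T) :=
  ⟨⟨someRunSeq T (Classical.arbitrary S, Classical.arbitrary A) (Classical.arbitrary A),
    someRunSeq_isRun _ _ _⟩⟩

instance instNonemptyRunsX [Nonempty S] [Nonempty A] [Nonempty X] (T : S → A → X → PMF S) :
    Nonempty (RunsX T) :=
  ⟨⟨(Classical.arbitrary X,
      someRunSeq (evalT T (Classical.arbitrary X))
        (Classical.arbitrary S, Classical.arbitrary A) (Classical.arbitrary A)),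
    someRunSeq_isRun _ _ _⟩⟩

instance instNonemptyHistX [Nonempty S] [Nonempty X] (T : S → A → X → PMF S) :
    Nonempty (HistX T) :=
  ⟨⟨(Classical.arbitrary X, ([], Classical.arbitrary S)), trivial⟩⟩

instance instNonemptyHistOf [Nonempty S] (T : S → A → PMF S) :
    Nonempty (HistOf T) :=
  ⟨⟨([], Classical.arbitrary S), trivial⟩⟩

theorem isHistL_prefix (T : S → A → PMF S) :
    ∀ (pre : List (S × A)) (s : S) (a : A) (rest : List (S × A)) (t : S),
      IsHistL T (pre ++ (s, a) :: rest) t → IsHistL T pre s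
  | [], _, _, _, _, _ => trivial
  | (u, b) :: pre', s, a, rest, t, hv => by
      obtain ⟨h1, h2⟩ := hv
      refine ⟨?_, isHistL_prefix T pre' s a rest t h2⟩
      have : Hist.first (pre' ++ (s, a) :: rest, t) = Hist.first (pre', s) := by
        cases pre' <;> rfl
      simpa only [List.append_eq, this] using h1

theorem indT_apply (T : S → A → X → PMF S) (s s' : S) (a : A) (x : X) :
    indT T (s, x) a (s', x) = T s a x s' := by
  rw [indT, PMF.map_apply, tsum_eq_single s' (by intro u hu; simp [Ne.symm hu])]
  simp

theorem first_map (x : X) (l : List (S × A)) (t : S) :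
    Hist.first ((l.map fun p => ((p.1, x), p.2)), (t, x)) = (Hist.first (l, t), x) := by
  cases l <;> rfl

theorem coneProbAux_fHistSeq (T : S → A → X → PMF S) (x : X)
    (πX : X × Hist S A → PMF A) (π' : Hist (S × X) A → PMF A)
    (hPhi : ∀ (x : X) (h : Hist S A), IsHist (evalT T x) h → π' (fHistSeq x h) = πX (x, h)) :
    ∀ (l pre : List (S × A)) (t : S), IsHistL (evalT T x) (pre ++ l) t →
      coneProbAux (indT T) π' (pre.map fun p => ((p.1, x), p.2))
          (l.map fun p => ((p.1, x), p.2)) (t, x) =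
        coneProbAux (evalT T x) (fun h => πX (x, h)) pre l t
  | [], _, _, _ => rfl
  | (s, a) :: rest, pre, t, hv => by
      have hpre : IsHistL (evalT T x) pre s := isHistL_prefix _ pre s a rest t hv
      have hrec := coneProbAux_fHistSeq T x πX π' hPhi rest (pre ++ [(s, a)]) t
        (by simpa using hv)
      show π' ((pre.map fun p => ((p.1, x), p.2)), (s, x)) a *
          indT T (s, x) a (Hist.first ((rest.map fun p => ((p.1, x), p.2)), (t, x))) *
          coneProbAux (indT T) π'
            ((pre.map fun p => ((p.1, x), p.2)) ++ [((s, x), a)])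
            (rest.map fun p => ((p.1, x), p.2)) (t, x) = _
      have h1 : π' ((pre.map fun p => ((p.1, x), p.2)), (s, x)) a = πX (x, (pre, s)) a := by
        rw [show ((pre.map fun p => ((p.1, x), p.2) : List ((S × X) × A)), ((s : S), x)) =
          fHistSeq x (pre, s) from rfl, hPhi x (pre, s) hpre]
      have h2 : indT T (s, x) a (Hist.first ((rest.map fun p => ((p.1, x), p.2)), (t, x))) =
          evalT T x s a (Hist.first (rest, t)) := by
        rw [first_map, indT_apply]; rfl
      have h3 : (pre.map fun p => ((p.1, x), p.2)) ++ [((s, x), a)] =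
          (pre ++ [(s, a)]).map fun p => ((p.1, x), p.2) := by simp
      rw [h1, h2, h3, hrec]
      rfl

theorem first_fHistSeq (x : X) (h : Hist S A) :
    Hist.first (fHistSeq x h) = (Hist.first h, x) := by
  obtain ⟨l, t⟩ := h; cases l <;> rfl

/-- Let `p ∈ Dist(X)` be a parameter distribution, `π_X` a pMDP policy of
`M`, `π' = Φ(π_X) = π_X ∘ f⁻¹`, and `i'(s,x) = i(s)·p(x)`. Then for every `x ∈ X` and every
history `h` of `M(x)`,
`P^M_{π_X,i,p}({x} × Cone(h)) = P^{M'}_{π',i'}(Cone(f(x,h)))`,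
and both equal `p(x) · P^{M(x)}_{π_x,i}(Cone(h))`. -/
theorem measure_cone_correspondence (T : S → A → X → PMF S) (i : PMF S) (p : PMF X)
    (πX : X × Hist S A → PMF A)
    (hind : ∀ (x y : X) (h : Hist S A), IsHist (evalT T x) h → IsHist (evalT T y) h →
      πX (x, h) = πX (y, h))
    (π' : Hist (S × X) A → PMF A)
    (hPhi : ∀ (x : X) (h : Hist S A), IsHist (evalT T x) h → π' (fHistSeq x h) = πX (x, h))
    (i' : PMF (S × X)) (hi' : ∀ s x, i' (s, x) = i s * p x)
    (Px : ∀ x : X, Measure (Runs (evalT T x)))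
    (hPx : ∀ (x : X) (h : Hist S A), IsHist (evalT T x) h →
      Px x (Cone (evalT T x) h) = coneProb (evalT T x) i (fun h => πX (x, h)) h)
    (μ : Measure (RunsX T))
    (hμ : ∀ (x : X) (h : Hist S A), IsHist (evalT T x) h →
      μ (ConeX T x h) = p x * Px x (Cone (evalT T x) h))
    (P' : Measure (Runs (indT T)))
    (hP' : ∀ h' : Hist (S × X) A, IsHist (indT T) h' →
      P' (Cone (indT T) h') = coneProb (indT T) i' π' h')
    (x : X) (h : Hist S A) (hh : IsHist (evalT T x) h) :
    μ (ConeX T x h) = P' (Cone (indT T) (fHistSeq x h)) ∧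
      μ (ConeX T x h) = p x * Px x (Cone (evalT T x) h) := by
  refine ⟨?_, hμ x h hh⟩
  rw [hμ x h hh, hPx x h hh, hP' _ (isHist_fHistSeq T x h.1 h.2 hh)]
  unfold coneProb
  have haux := coneProbAux_fHistSeq T x πX π' hPhi h.1 [] h.2 hh
  simp only [List.map_nil] at haux
  rw [show (fHistSeq x h).1 = h.1.map fun p => ((p.1, x), p.2) from rfl,
    show (fHistSeq x h).2 = (h.2, x) from rfl, first_fHistSeq, hi', haux]
  obtain ⟨l, t⟩ := h
  ring

end PMDPEncoding
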